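/- Let A be Hermitian and B Hermitian positive definite with generalized eigenpair approximation (θ, x̂), ‖x̂‖=1 and residual r = A x̂ − θ B x̂. Then there is a generalized eigenvalue λ of (A, B) with |λ − θ| ≤ ‖B^{-1}‖ · ‖r‖. -/

import Mathlib

open Matrix
open scoped ComplexOrder Matrix.Norms.L2Operator MatrixOrder

lemma aux_expand {n : ℕ} (H : Matrix (Fin n) (Fin n) ℂ) (hH : H.IsHermitian)
    (u : EuclideanSpace ℂ (Fin n)) :
    H.mulVec u = ∑ j, ((hH.eigenvalues j : ℂ) * hH.eigenvectorBasis.repr u j) • (hH.eigenvectorBasis j : EuclideanSpace ℂ (Fin n)) := by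
  conv_lhs => rw [← hH.eigenvectorBasis.sum_repr u]
  rw [WithLp.ofLp_sum, WithLp.ofLp_sum, ← Matrix.mulVecLin_apply, map_sum]
  refine Finset.sum_congr rfl fun j _ => ?_
  rw [WithLp.ofLp_smul, _root_.map_smul, Matrix.mulVecLin_apply]
  erw [hH.mulVec_eigenvectorBasis j]
  rw [WithLp.ofLp_smul, RCLike.real_smul_eq_coe_smul (K := ℂ), smul_smul, mul_comm]
  rfl

lemma aux_min_bound {n : ℕ} (H : Matrix (Fin n) (Fin n) ℂ) (hH : H.IsHermitian)
    (i : Fin n) (hmin : ∀ j, |hH.eigenvalues i| ≤ |hH.eigenvalues j|)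
    (u w : EuclideanSpace ℂ (Fin n)) (hw : w = H.mulVec u) :
    |hH.eigenvalues i| * ‖u‖ ≤ ‖w‖ := by
  set b := hH.eigenvectorBasis with hb
  set ν := hH.eigenvalues with hν
  have hw2 : w = ∑ x, ((ν x : ℂ) * b.repr u x) • b x := WithLp.ofLp_injective 2 (hw.trans (aux_expand H hH u))
  have hrepr : ∀ j, b.repr w j = (ν j : ℂ) * b.repr u j := by
    intro j
    rw [b.repr_apply_apply, hw2]
    exact b.orthonormal.inner_right_fintype _ j
  have hnu : ‖u‖ ^ 2 = ∑ j, ‖b.repr u j‖ ^ 2 := by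
    rw [← b.repr.norm_map u, EuclideanSpace.norm_eq, Real.sq_sqrt (by positivity)]
  have hnHu : ‖w‖ ^ 2 = ∑ j, ‖(ν j : ℂ) * b.repr u j‖ ^ 2 := by
    rw [← b.repr.norm_map w, EuclideanSpace.norm_eq, Real.sq_sqrt (by positivity)]
    simp_rw [hrepr]
  have hsq : (|ν i| * ‖u‖) ^ 2 ≤ ‖w‖ ^ 2 := by
    rw [mul_pow, hnu, hnHu, Finset.mul_sum]
    refine Finset.sum_le_sum fun j _ => ?_
    rw [norm_mul, mul_pow, Complex.norm_real, Real.norm_eq_abs]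
    exact mul_le_mul_of_nonneg_right (pow_le_pow_left₀ (abs_nonneg _) (hmin j) 2) (by positivity)
  have h0 : 0 ≤ ‖w‖ := norm_nonneg _
  exact le_of_pow_le_pow_left₀ two_ne_zero h0 hsq

theorem generalized_eigenvalue_residual_bound {n : ℕ}
    (A B : Matrix (Fin n) (Fin n) ℂ) (hA : A.IsHermitian) (hB : B.PosDef)
    (θ : ℝ) (x : Fin n → ℂ)
    (hx : ∑ i, ‖x i‖ ^ 2 = 1)
    (r : Fin n → ℂ) (hr : r = A.mulVec x - (θ : ℂ) • B.mulVec x) :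
    ∃ (lam : ℝ) (v : Fin n → ℂ), v ≠ 0 ∧
      A.mulVec v = (lam : ℂ) • B.mulVec v ∧
      |lam - θ| ≤ ‖B⁻¹‖ * Real.sqrt (∑ i, ‖r i‖ ^ 2) := by
  have hne : Nonempty (Fin n) := by
    by_contra h
    rw [not_nonempty_iff] at h
    rw [Finset.univ_eq_empty, Finset.sum_empty] at hx
    exact zero_ne_one hx
  -- square root of B
  set S := CFC.sqrt B with hSdef
  have hS : S.IsHermitian := (nonneg_iff_posSemidef.1 (CFC.sqrt_nonneg B)).1
  have hSS : S * S = B := CFC.sqrt_mul_sqrt_self B (nonneg_iff_posSemidef.2 hB.posSemidef)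
  have hdetB : IsUnit B.det := isUnit_iff_ne_zero.2 (hB.det_pos.ne' : B.det ≠ 0)
  have hdet : IsUnit S.det :=
    isUnit_of_mul_isUnit_left (by rw [← det_mul, hSS]; exact hdetB)
  have hSiS : S⁻¹ * S = 1 := nonsing_inv_mul S hdet
  have hSSi : S * S⁻¹ = 1 := mul_nonsing_inv S hdet
  have hSinv : (S⁻¹).IsHermitian := hS.inv
  -- the Hermitian matrix H
  set H : Matrix (Fin n) (Fin n) ℂ := S⁻¹ * A * S⁻¹ - (θ : ℂ) • 1 with hHdef
  have hH : H.IsHermitian := by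
    apply Matrix.IsHermitian.sub
    · show (S⁻¹ * A * S⁻¹)ᴴ = S⁻¹ * A * S⁻¹
      rw [conjTranspose_mul, conjTranspose_mul, hSinv.eq, hA.eq]
      exact (mul_assoc _ _ _).symm
    · show ((θ : ℂ) • (1 : Matrix (Fin n) (Fin n) ℂ))ᴴ = _
      rw [conjTranspose_smul, conjTranspose_one, Complex.star_def, Complex.conj_ofReal]
  -- minimizing eigenvalue
  obtain ⟨i, -, hmin⟩ := Finset.exists_min_image Finset.univ (fun j => |hH.eigenvalues j|)
    ⟨Classical.arbitrary _, Finset.mem_univ _⟩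
  have hmin' : ∀ j, |hH.eigenvalues i| ≤ |hH.eigenvalues j| := fun j => hmin j (Finset.mem_univ j)
  set ν := hH.eigenvalues with hν
  set b := hH.eigenvectorBasis with hb
  refine ⟨ν i + θ, S⁻¹ *ᵥ ⇑(b i), ?_, ?_, ?_⟩
  · -- v ≠ 0
    intro h
    have h2 : S *ᵥ (S⁻¹ *ᵥ ⇑(b i)) = 0 := by rw [h, mulVec_zero]
    rw [mulVec_mulVec, hSSi, one_mulVec] at h2
    have h3 : b i = 0 := by
      apply (WithLp.equiv 2 _).injective
      simpa using h2
    exact b.orthonormal.ne_zero i h3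
  · -- eigen equation
    have heig : H *ᵥ ⇑(b i) = ν i • ⇑(b i) := hH.mulVec_eigenvectorBasis i
    have heq : (S⁻¹ * A * S⁻¹) *ᵥ ⇑(b i) = ((ν i : ℂ) + θ) • ⇑(b i) := by
      have h4 : H *ᵥ ⇑(b i) = (S⁻¹ * A * S⁻¹) *ᵥ ⇑(b i) - (θ : ℂ) • ⇑(b i) := by
        rw [hHdef, sub_mulVec, smul_mulVec, one_mulVec]
      rw [h4, sub_eq_iff_eq_add] at heig
      rw [heig, RCLike.real_smul_eq_coe_smul (K := ℂ), add_smul]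
      rfl
    calc A *ᵥ (S⁻¹ *ᵥ ⇑(b i)) = (A * S⁻¹) *ᵥ ⇑(b i) := by rw [mulVec_mulVec]
      _ = S *ᵥ ((S⁻¹ * A * S⁻¹) *ᵥ ⇑(b i)) := by
          rw [mulVec_mulVec, ← mul_assoc, ← mul_assoc, hSSi, one_mul]
      _ = ((ν i : ℂ) + θ) • (S *ᵥ ⇑(b i)) := by rw [heq, mulVec_smul]
      _ = ((ν i + θ : ℝ) : ℂ) • (B *ᵥ (S⁻¹ *ᵥ ⇑(b i))) := by
          rw [mulVec_mulVec, ← hSS, mul_assoc, hSSi, mul_one]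
          norm_cast
  · -- the bound
    set rE : EuclideanSpace ℂ (Fin n) := (WithLp.equiv 2 _).symm r with hrE
    set xE : EuclideanSpace ℂ (Fin n) := (WithLp.equiv 2 _).symm x with hxE
    set u0 : EuclideanSpace ℂ (Fin n) := (WithLp.equiv 2 _).symm (S *ᵥ x) with hu0
    set w0 : EuclideanSpace ℂ (Fin n) := (WithLp.equiv 2 _).symm (S⁻¹ *ᵥ r) with hw0
    have hxnorm : ‖xE‖ = 1 := by
      rw [EuclideanSpace.norm_eq]
      simp only [hxE, WithLp.equiv_symm_apply, PiLp.toLp_apply]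
      rw [hx, Real.sqrt_one]
    have hrnorm : ‖rE‖ = Real.sqrt (∑ i, ‖r i‖ ^ 2) := by
      rw [EuclideanSpace.norm_eq]
      simp only [hrE, WithLp.equiv_symm_apply, PiLp.toLp_apply]
    have hb1 : w0 = H.mulVec u0 := by
      rw [hw0, hu0, hr]
      show (WithLp.equiv 2 _).symm (S⁻¹ *ᵥ (A *ᵥ x - (θ : ℂ) • B *ᵥ x)) = H *ᵥ (S *ᵥ x)
      rw [mulVec_sub, mulVec_smul, mulVec_mulVec, mulVec_mulVec, ← hSS, ← mul_assoc, hSiS, one_mul]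
      rw [hHdef, sub_mulVec, smul_mulVec, one_mulVec, mulVec_mulVec,
        mul_assoc (S⁻¹ * A), hSiS, mul_one]
      rfl
    have hkey : |ν i| * ‖u0‖ ≤ ‖w0‖ := aux_min_bound H hH i hmin' u0 w0 hb1
    have h2 : ‖w0‖ ≤ ‖S⁻¹‖ * ‖rE‖ := l2_opNorm_mulVec S⁻¹ rE
    have h3 : ‖xE‖ ≤ ‖S⁻¹‖ * ‖u0‖ := by
      have := l2_opNorm_mulVec S⁻¹ u0
      have hx2 : S⁻¹ *ᵥ (S *ᵥ x) = x := by rw [mulVec_mulVec, hSiS, one_mulVec]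
      rw [show S⁻¹ *ᵥ u0 = x from hx2] at this
      exact this
    have hBnorm : ‖B⁻¹‖ = ‖S⁻¹‖ * ‖S⁻¹‖ := by
      rw [← hSS, Matrix.mul_inv_rev]
      nth_rewrite 1 [← hSinv.eq]
      exact l2_opNorm_conjTranspose_mul_self S⁻¹
    have habs2 : |ν i + θ - θ| = |ν i| := by rw [add_sub_cancel_right]
    rw [habs2, hBnorm, ← hrnorm]
    have c1 : |ν i| * 1 ≤ |ν i| * (‖S⁻¹‖ * ‖u0‖) :=
      mul_le_mul_of_nonneg_left (hxnorm ▸ h3) (abs_nonneg _)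
    have c3 : ‖S⁻¹‖ * (|ν i| * ‖u0‖) ≤ ‖S⁻¹‖ * ‖w0‖ :=
      mul_le_mul_of_nonneg_left hkey (norm_nonneg _)
    have c4 : ‖S⁻¹‖ * ‖w0‖ ≤ ‖S⁻¹‖ * (‖S⁻¹‖ * ‖rE‖) :=
      mul_le_mul_of_nonneg_left h2 (norm_nonneg _)
    nlinarith [c1, c3, c4]
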